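/- As the interference channel gain f → ∞ (with ps, pr, h, σ² > 0 fixed), the first-hop rate under proper interference R(0) = (1/2)·log₂(1 + (2·ps·h·(pr·f+σ²) + ps²·h²)/(pr²·f² + 2·pr·f·σ² + σ⁴)) tends to 0, while under maximally improper interference R(1) = (1/2)·log₂(1 + (2·ps·h·(pr·f+σ²) + ps²·h²)/(2·pr·f·σ² + σ⁴)) tends to (1/2)·log₂(1 + ps·h/σ²) > 0. -/

import Mathlib

open Real Filter Topology

/-!
The signal-to-interference-plus-noise ratio of both rates has a numerator affine in `f`.
Under proper interference the denominator is the square `(pr f + σ²)²`, so the ratio decays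
like `1/f`; under maximally improper interference the denominator is only affine in `f`, so the
ratio tends to the quotient of the leading coefficients, `2 ps h pr / (2 pr σ²) = ps h / σ²`.
The rate `x ↦ ½ log₂ (1 + x)` is continuous, which transfers both limits.
-/

theorem tendsto_affine_div_affine_atTop (a b d : ℝ) {c : ℝ} (hc : c ≠ 0) :
    Tendsto (fun x => (a * x + b) / (c * x + d)) atTop (𝓝 (a / c)) := by
  have hlim : Tendsto (fun x => (a + b / x) / (c + d / x)) atTop (𝓝 ((a + 0) / (c + 0))) :=
    (tendsto_const_nhds.add (tendsto_const_nhds.div_atTop tendsto_id)).div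
      (tendsto_const_nhds.add (tendsto_const_nhds.div_atTop tendsto_id)) (by simpa using hc)
  rw [add_zero, add_zero] at hlim
  refine hlim.congr' ?_
  filter_upwards [eventually_gt_atTop 0] with x hx
  field_simp

theorem tendsto_affine_div_affine_sq_atTop (a b d : ℝ) {c : ℝ} (hc : 0 < c) :
    Tendsto (fun x => (a * x + b) / (c * x + d) ^ 2) atTop (𝓝 0) := by
  have hden : Tendsto (fun x => c * x + d) atTop atTop :=
    tendsto_atTop_add_const_right _ d (tendsto_id.const_mul_atTop hc)
  simpa only [sq, div_div] using
    (tendsto_affine_div_affine_atTop a b d hc.ne').div_atTop hden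

theorem Filter.Tendsto.half_logb_two_one_add {α : Type*} {l : Filter α} {g : α → ℝ} {y : ℝ}
    (hg : Tendsto g l (𝓝 y)) (hy : 0 < 1 + y) :
    Tendsto (fun t => 1 / 2 * Real.logb 2 (1 + g t)) l (𝓝 (1 / 2 * Real.logb 2 (1 + y))) :=
  ((continuousAt_logb hy.ne').tendsto.comp (tendsto_const_nhds.add hg)).const_mul _

/-- As `f → ∞`, the first-hop rate under proper interference tends to `0`,
while under maximally improper interference it tends to
`(1/2)·log₂(1 + ps·h/σ²) > 0`. -/
theorem rate_high_IRI_limits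
    (ps pr h σ2 : ℝ) (hps : 0 < ps) (hpr : 0 < pr) (hh : 0 < h) (hσ2 : 0 < σ2) :
    Tendsto (fun f : ℝ =>
        (1 / 2) * Real.logb 2 (1 + (2 * ps * h * (pr * f + σ2) + ps ^ 2 * h ^ 2) /
          (pr ^ 2 * f ^ 2 + 2 * pr * f * σ2 + σ2 ^ 2)))
      atTop (nhds 0) ∧
    Tendsto (fun f : ℝ =>
        (1 / 2) * Real.logb 2 (1 + (2 * ps * h * (pr * f + σ2) + ps ^ 2 * h ^ 2) /
          (2 * pr * f * σ2 + σ2 ^ 2)))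
      atTop (nhds ((1 / 2) * Real.logb 2 (1 + ps * h / σ2))) ∧
    0 < (1 / 2) * Real.logb 2 (1 + ps * h / σ2) := by
  have hsnr : 0 < ps * h / σ2 := by positivity
  have hproper := tendsto_affine_div_affine_sq_atTop
    (2 * ps * h * pr) (2 * ps * h * σ2 + ps ^ 2 * h ^ 2) σ2 hpr
  have himproper := tendsto_affine_div_affine_atTop
    (2 * ps * h * pr) (2 * ps * h * σ2 + ps ^ 2 * h ^ 2) (σ2 ^ 2) (c := 2 * pr * σ2) (by positivity)
  rw [show 2 * ps * h * pr / (2 * pr * σ2) = ps * h / σ2 by field_simp] at himproper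
  refine ⟨?_, ?_, ?_⟩
  · simpa using (hproper.half_logb_two_one_add (by norm_num)).congr fun f => by ring_nf
  · exact (himproper.half_logb_two_one_add (by linarith)).congr fun f => by ring_nf
  · have := logb_pos one_lt_two (lt_add_of_pos_right 1 hsnr)
    positivity
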